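/- arXiv:1806.01678 — 5 statements merged into one kernel-verified Lean document; each statement's English description precedes it below -/
import Mathlib

section
/- Let V be a finite set, let w_ij > 0 be weights on pairs of distinct elements of V, and let d_ij ∈ {0,1} for each pair. Consider the problem of minimizing Σ_{i<j} w_ij |x_ij - d_ij| over all x satisfying only the triangle inequality constraints x_ij ≤ x_ik + x_jk for all triples of distinct i,j,k (without any bound constraints on the variables). Then every optimal solution x of this problem satisfies 0 ≤ x_ij ≤ 1 for all pairs (i,j). -/
open Finset

/-- The set of ordered pairs `(i,j)` with `i < j`, used to index unordered
pairs of distinct nodes. -/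
def pairsFin (n : ℕ) : Finset (Fin n × Fin n) :=
  Finset.univ.filter (fun p => p.1 < p.2)

private lemma clamp_tri {a b c : ℝ} (h : a ≤ b + c) :
    max 0 (min 1 a) ≤ max 0 (min 1 b) + max 0 (min 1 c) := by
  rcases le_total 1 b with hb | hb
  · have : max 0 (min 1 b) = 1 := by simp [min_eq_left hb]
    rw [this]
    have h1 : min 1 a ≤ 1 := min_le_left _ _
    have h2 : (0:ℝ) ≤ max 0 (min 1 c) := le_max_left _ _
    have : max 0 (min 1 a) ≤ 1 := max_le zero_le_one h1
    linarith
  · rcases le_total 1 c with hc | hc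
    · have : max 0 (min 1 c) = 1 := by simp [min_eq_left hc]
      rw [this]
      have h1 : min 1 a ≤ 1 := min_le_left _ _
      have h2 : (0:ℝ) ≤ max 0 (min 1 b) := le_max_left _ _
      have : max 0 (min 1 a) ≤ 1 := max_le zero_le_one h1
      linarith
    · have hb' : max 0 (min 1 b) = max 0 b := by rw [min_eq_right hb]
      have hc' : max 0 (min 1 c) = max 0 c := by rw [min_eq_right hc]
      rw [hb', hc']
      have h1 : max 0 (min 1 a) ≤ max 0 a :=
        max_le_max le_rfl (min_le_right _ _)
      have h2 : max 0 a ≤ max 0 b + max 0 c := by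
        rcases le_total a 0 with ha | ha
        · have := le_max_left (0:ℝ) b
          have := le_max_left (0:ℝ) c
          simp [max_eq_left ha]; linarith
        · have h3 : b ≤ max 0 b := le_max_right _ _
          have h4 : c ≤ max 0 c := le_max_right _ _
          have : max 0 a = a := max_eq_right ha
          linarith
      linarith

private lemma clamp_abs_le {d : ℝ} (hd : d = 0 ∨ d = 1) (t : ℝ) :
    |max 0 (min 1 t) - d| ≤ |t - d| := by
  rcases le_total t 0 with h0 | h0
  · have : max 0 (min 1 t) = 0 := by
      rw [min_eq_right (h0.trans zero_le_one), max_eq_left h0]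
    rw [this]
    rcases hd with h | h <;> subst h <;>
      [skip; rw [abs_of_nonpos (by linarith), abs_of_nonpos (by linarith)]] <;>
      simp [abs_of_nonpos h0] <;> linarith [abs_nonneg t]
  · rcases le_total 1 t with h1 | h1
    · have : max 0 (min 1 t) = 1 := by simp [min_eq_left h1]
      rw [this]
      rcases hd with h | h <;> subst h
      · rw [abs_of_nonneg (by linarith), abs_of_nonneg (by linarith)]; simpa using h1
      · rw [abs_of_nonneg (by linarith), abs_of_nonneg (by linarith)]; linarith
    · have : max 0 (min 1 t) = t := by rw [min_eq_right h1, max_eq_right h0]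
      rw [this]

private lemma clamp_abs_lt {d : ℝ} (hd : d = 0 ∨ d = 1) {t : ℝ}
    (ht : t < 0 ∨ 1 < t) : |max 0 (min 1 t) - d| < |t - d| := by
  rcases ht with ht | ht
  · have : max 0 (min 1 t) = 0 := by
      rw [min_eq_right (by linarith), max_eq_left ht.le]
    rw [this]
    rcases hd with h | h <;> subst h
    · rw [sub_zero, sub_zero, abs_of_nonpos ht.le]; simpa using ht
    · rw [abs_of_nonpos (by norm_num), abs_of_nonpos (by linarith)]; linarith
  · have : max 0 (min 1 t) = 1 := by simp [min_eq_left ht.le]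
    rw [this]
    rcases hd with h | h <;> subst h
    · rw [abs_of_nonneg (by linarith), abs_of_nonneg (by linarith)]; linarith
    · rw [abs_of_nonneg (by linarith), abs_of_nonneg (by linarith)]; linarith

/-- If `x` minimizes `∑_{i<j} w_ij |x_ij - d_ij|` (with
`w_ij > 0` and `d_ij ∈ {0,1}`) over all symmetric vectors satisfying only the
triangle inequality constraints, then `0 ≤ x_ij ≤ 1` for all pairs. -/
theorem stmt2 {n : ℕ} (w d : Fin n → Fin n → ℝ)
    (hw_symm : ∀ i j, w i j = w j i) (hd_symm : ∀ i j, d i j = d j i)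
    (hw_pos : ∀ i j : Fin n, i ≠ j → 0 < w i j)
    (hd01 : ∀ i j : Fin n, d i j = 0 ∨ d i j = 1)
    (x : Fin n → Fin n → ℝ)
    (hx_symm : ∀ i j, x i j = x j i)
    (hx_tri : ∀ i j k : Fin n, i ≠ j → i ≠ k → j ≠ k → x i j ≤ x i k + x j k)
    (hx_opt : ∀ x' : Fin n → Fin n → ℝ, (∀ i j, x' i j = x' j i) →
      (∀ i j k : Fin n, i ≠ j → i ≠ k → j ≠ k → x' i j ≤ x' i k + x' j k) →
      ∑ p ∈ pairsFin n, w p.1 p.2 * |x p.1 p.2 - d p.1 p.2|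
        ≤ ∑ p ∈ pairsFin n, w p.1 p.2 * |x' p.1 p.2 - d p.1 p.2|) :
    ∀ i j : Fin n, i ≠ j → 0 ≤ x i j ∧ x i j ≤ 1 := by
  -- the clamped solution
  set x' : Fin n → Fin n → ℝ := fun i j => max 0 (min 1 (x i j)) with hx'
  have hx'_symm : ∀ i j, x' i j = x' j i := by
    intro i j; simp [hx', hx_symm i j]
  have hx'_tri : ∀ i j k : Fin n, i ≠ j → i ≠ k → j ≠ k →
      x' i j ≤ x' i k + x' j k := by
    intro i j k h1 h2 h3
    exact clamp_tri (hx_tri i j k h1 h2 h3)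
  have hopt := hx_opt x' hx'_symm hx'_tri
  -- claim: x' = x on all pairs in pairsFin, in the sense 0 ≤ x ≤ 1
  have key : ∀ p ∈ pairsFin n, 0 ≤ x p.1 p.2 ∧ x p.1 p.2 ≤ 1 := by
    intro p hp
    by_contra hcon
    push_neg at hcon
    have hpne : p.1 ≠ p.2 := by
      have : p.1 < p.2 := (Finset.mem_filter.mp hp).2
      exact ne_of_lt this
    have ht : x p.1 p.2 < 0 ∨ 1 < x p.1 p.2 := by
      rcases lt_or_ge (x p.1 p.2) 0 with h | h
      · exact Or.inl h
      · exact Or.inr (hcon h)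
    have hlt : ∑ q ∈ pairsFin n, w q.1 q.2 * |x' q.1 q.2 - d q.1 q.2|
        < ∑ q ∈ pairsFin n, w q.1 q.2 * |x q.1 q.2 - d q.1 q.2| := by
      apply Finset.sum_lt_sum
      · intro q hq
        have hqne : q.1 ≠ q.2 := ne_of_lt (Finset.mem_filter.mp hq).2
        exact mul_le_mul_of_nonneg_left (clamp_abs_le (hd01 q.1 q.2) _)
          (hw_pos q.1 q.2 hqne).le
      · refine ⟨p, hp, ?_⟩
        exact mul_lt_mul_of_pos_left (clamp_abs_lt (hd01 p.1 p.2) ht)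
          (hw_pos p.1 p.2 hpne)
    exact absurd hopt (not_le.mpr hlt)
  intro i j hij
  rcases lt_or_gt_of_ne hij with h | h
  · exact key (i, j) (Finset.mem_filter.mpr ⟨Finset.mem_univ _, h⟩)
  · have := key (j, i) (Finset.mem_filter.mpr ⟨Finset.mem_univ _, h⟩)
    rw [hx_symm i j]; exact this
end

section
/- Let A ∈ ℝ^{M×N}, b ∈ ℝ^M, let c ∈ ℝ^N have all entries strictly positive, and let 𝒜 = {x ∈ ℝ^N : Ax ≤ b}. Let x* be a minimizer over 𝒜 of the linear objective cᵀx, and assume every entry of x* lies between 0 and B for some B > 0. Let W be the diagonal matrix with diagonal entries W_ii = c_i, let γ > 0, and let x̂ be a minimizer over 𝒜 of the quadratic objective cᵀx + (1/(2γ)) xᵀWx. Then cᵀx* ≤ cᵀx̂ ≤ cᵀx* (1 + B/(2γ)). -/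
open Matrix

/-- Let `𝒜 = {x : Ax ≤ b}`, let `c` have positive entries,
let `x*` minimize `cᵀx` over `𝒜` with `0 ≤ x*_i ≤ B`, and let `x̂` minimize
`cᵀx + (1/(2γ)) xᵀWx` over `𝒜`, where `W = diagonal c`. Then
`cᵀx* ≤ cᵀx̂ ≤ cᵀx* (1 + B/(2γ))`. -/
theorem stmt3 {M N : ℕ} (A : Matrix (Fin M) (Fin N) ℝ) (b : Fin M → ℝ)
    (c : Fin N → ℝ) (hc : ∀ i, 0 < c i)
    (B : ℝ) (hB : 0 < B) (γ : ℝ) (hγ : 0 < γ)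
    (xs : Fin N → ℝ)
    (hxs_feas : ∀ i, A.mulVec xs i ≤ b i)
    (hxs_opt : ∀ x : Fin N → ℝ, (∀ i, A.mulVec x i ≤ b i) → c ⬝ᵥ xs ≤ c ⬝ᵥ x)
    (hxs_bdd : ∀ i, 0 ≤ xs i ∧ xs i ≤ B)
    (xh : Fin N → ℝ)
    (hxh_feas : ∀ i, A.mulVec xh i ≤ b i)
    (hxh_opt : ∀ x : Fin N → ℝ, (∀ i, A.mulVec x i ≤ b i) →
      c ⬝ᵥ xh + (1 / (2 * γ)) * (xh ⬝ᵥ (Matrix.diagonal c).mulVec xh)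
        ≤ c ⬝ᵥ x + (1 / (2 * γ)) * (x ⬝ᵥ (Matrix.diagonal c).mulVec x)) :
    c ⬝ᵥ xs ≤ c ⬝ᵥ xh ∧ c ⬝ᵥ xh ≤ c ⬝ᵥ xs * (1 + B / (2 * γ)) := by

  have hq : ∀ y : Fin N → ℝ, y ⬝ᵥ (Matrix.diagonal c).mulVec y = ∑ i, c i * y i ^ 2 := by
    intro y
    simp [dotProduct, Matrix.mulVec_diagonal]
    apply Finset.sum_congr rfl
    intro i _
    ring
  have hpos : 0 < 1 / (2 * γ) := by positivity
  constructor
  · exact hxs_opt xh hxh_feas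
  · have h1 := hxh_opt xs hxs_feas
    have hqh : 0 ≤ xh ⬝ᵥ (Matrix.diagonal c).mulVec xh := by
      rw [hq]
      apply Finset.sum_nonneg
      intro i _
      have := hc i
      positivity
    have hqs : xs ⬝ᵥ (Matrix.diagonal c).mulVec xs ≤ B * (c ⬝ᵥ xs) := by
      rw [hq, dotProduct, Finset.mul_sum]
      apply Finset.sum_le_sum
      intro i _
      have h0 := (hxs_bdd i).1
      have hBi := (hxs_bdd i).2
      have := hc i
      nlinarith [mul_le_mul_of_nonneg_right hBi h0]
    have : c ⬝ᵥ xh ≤ c ⬝ᵥ xs + (1 / (2 * γ)) * (B * (c ⬝ᵥ xs)) := by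
      nlinarith
    calc c ⬝ᵥ xh ≤ c ⬝ᵥ xs + (1 / (2 * γ)) * (B * (c ⬝ᵥ xs)) := this
      _ = c ⬝ᵥ xs * (1 + B / (2 * γ)) := by ring
end

section
/- Let G = (V,E) be a connected graph with n = |V| > 4 nodes, and let S* be a subset achieving the minimum sparsest cut score φ* with min(|S*|, |V∖S*|) ≥ 2. Fix λ ∈ (0,1) and define weights w_ij = 1 if (i,j) ∈ E and w_ij = λ otherwise. Define s* = (s*_ij) by s*_ij = n/(|S*|·|V∖S*|) if exactly one of i,j lies in S*, and s*_ij = 0 otherwise. Then Σ_{i<j} w_ij (s*_ij)² ≤ φ*(1 + λn). -/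
/-! Only pairs crossing `S*` contribute, each with `(s*_ij)² = α²` where `α = n/(|S*||S̄*|)`.
Bounding `w_ij ≤ [ij ∈ E] + λ` and the number of crossing pairs by `|S*||S̄*| = n/α` gives
`∑ w_ij (s*_ij)² ≤ α² cut(S*) + λnα`. Both sides of `S*` having at least two nodes gives
`α ≤ 1`, connectivity gives `cut(S*) ≥ 1`, so this is at most `α cut(S*) (1 + λn) = φ(S*)(1 + λn)`. -/

open Finset

/-- `cut(S)`: the number of edges of `G` with exactly one endpoint in `S`. -/
def cutFin {n : ℕ} (G : SimpleGraph (Fin n)) [DecidableRel G.Adj]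
    (S : Finset (Fin n)) : ℕ :=
  ((pairsFin n).filter (fun p => G.Adj p.1 p.2 ∧
    ((p.1 ∈ S ∧ p.2 ∉ S) ∨ (p.1 ∉ S ∧ p.2 ∈ S)))).card

section Cut

variable {n : ℕ}

def crossPairs (S : Finset (Fin n)) : Finset (Fin n × Fin n) :=
  (pairsFin n).filter (fun p => (p.1 ∈ S ∧ p.2 ∉ S) ∨ (p.1 ∉ S ∧ p.2 ∈ S))

lemma cutFin_eq_card_filter_crossPairs (G : SimpleGraph (Fin n)) [DecidableRel G.Adj]
    (S : Finset (Fin n)) :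
    cutFin G S = ((crossPairs S).filter (fun p => G.Adj p.1 p.2)).card := by
  rw [cutFin, crossPairs, filter_filter]
  exact congrArg card (filter_congr fun p _ => and_comm)

lemma card_crossPairs_le (S : Finset (Fin n)) : (crossPairs S).card ≤ S.card * Sᶜ.card := by
  rw [← card_product]
  refine (card_le_card fun p hp => ?_).trans
    (card_image_le (f := fun q : Fin n × Fin n => (min q.1 q.2, max q.1 q.2)))
  simp only [crossPairs, pairsFin, mem_filter, mem_univ, true_and] at hp
  obtain ⟨hlt, h₁ | h₂⟩ := hp
  · exact mem_image.2 ⟨p, by simpa using h₁, by simp [hlt.le]⟩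
  · exact mem_image.2 ⟨p.swap, by simpa using h₂.symm, by simp [hlt.le]⟩

lemma one_le_cutFin {G : SimpleGraph (Fin n)} [DecidableRel G.Adj] (hconn : G.Connected)
    {S : Finset (Fin n)} {u v : Fin n} (hu : u ∈ S) (hv : v ∉ S) : 1 ≤ cutFin G S := by
  obtain ⟨d, -, hd₁, hd₂⟩ :=
    (hconn.preconnected u v).some.exists_boundary_dart (S : Set (Fin n)) hu hv
  rw [Finset.mem_coe] at hd₁ hd₂
  rw [cutFin, Nat.one_le_iff_ne_zero, Ne, card_eq_zero, ← Ne, ← nonempty_iff_ne_empty]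
  rcases lt_or_gt_of_ne (G.ne_of_adj d.adj) with hlt | hgt
  · exact ⟨(d.fst, d.snd), by simp [pairsFin, hlt, d.adj, hd₁, hd₂]⟩
  · exact ⟨(d.snd, d.fst), by simp [pairsFin, hgt, d.adj.symm, hd₁, hd₂]⟩

lemma le_card_mul_card_compl {S : Finset (Fin n)} (hS : 2 ≤ S.card) (hSc : 2 ≤ Sᶜ.card) :
    n ≤ S.card * Sᶜ.card := by
  simpa only [card_add_card_compl, Fintype.card_fin] using add_le_mul hS hSc

lemma sum_weight_mul_sq_le (G : SimpleGraph (Fin n)) [DecidableRel G.Adj]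
    (S : Finset (Fin n)) {lam c : ℝ} (hlam : 0 ≤ lam) (w s : Fin n → Fin n → ℝ)
    (hw : ∀ i j, w i j = if G.Adj i j then 1 else lam)
    (hs : ∀ i j, s i j = if (i ∈ S ∧ j ∉ S) ∨ (i ∉ S ∧ j ∈ S) then c else 0) :
    ∑ p ∈ pairsFin n, w p.1 p.2 * (s p.1 p.2) ^ 2
      ≤ c ^ 2 * (cutFin G S + lam * (crossPairs S).card) := by
  have hweight : ∀ p : Fin n × Fin n, w p.1 p.2 ≤ (if G.Adj p.1 p.2 then 1 else 0) + lam := by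
    intro p
    rw [hw]
    split_ifs <;> linarith
  calc ∑ p ∈ pairsFin n, w p.1 p.2 * (s p.1 p.2) ^ 2
      = ∑ p ∈ crossPairs S, w p.1 p.2 * c ^ 2 := by
        rw [crossPairs, sum_filter]
        refine sum_congr rfl fun p _ => ?_
        rw [hs]
        split_ifs <;> simp
    _ ≤ ∑ p ∈ crossPairs S, ((if G.Adj p.1 p.2 then 1 else 0) + lam) * c ^ 2 :=
        sum_le_sum fun p _ => mul_le_mul_of_nonneg_right (hweight p) (sq_nonneg c)
    _ = c ^ 2 * (cutFin G S + lam * (crossPairs S).card) := by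
        rw [← sum_mul, sum_add_distrib, sum_boole, sum_const, nsmul_eq_mul,
          cutFin_eq_card_filter_crossPairs]
        ring

end Cut

theorem stmt6_general {n : ℕ} (G : SimpleGraph (Fin n)) [DecidableRel G.Adj]
    (hconn : G.Connected)
    (φ : Finset (Fin n) → ℝ)
    (hφ : ∀ S : Finset (Fin n),
      φ S = (n : ℝ) * (cutFin G S : ℝ) / ((S.card : ℝ) * (Sᶜ.card : ℝ)))
    (Sstar : Finset (Fin n))
    (hS_two : 2 ≤ Sstar.card ∧ 2 ≤ Sstarᶜ.card)
    (lam : ℝ) (hlam : 0 < lam ∧ lam < 1)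
    (w : Fin n → Fin n → ℝ)
    (hw : ∀ i j, w i j = if G.Adj i j then 1 else lam)
    (s : Fin n → Fin n → ℝ)
    (hs : ∀ i j, s i j =
      if (i ∈ Sstar ∧ j ∉ Sstar) ∨ (i ∉ Sstar ∧ j ∈ Sstar)
        then (n : ℝ) / ((Sstar.card : ℝ) * (Sstarᶜ.card : ℝ)) else 0) :
    ∑ p ∈ pairsFin n, w p.1 p.2 * (s p.1 p.2) ^ 2
      ≤ φ Sstar * (1 + lam * n) := by
  obtain ⟨ha, hb⟩ := hS_two
  set a := Sstar.card
  set b := Sstarᶜ.card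
  set α : ℝ := n / (a * b)
  set cut : ℝ := (cutFin G Sstar : ℝ)
  have hab : (0 : ℝ) < a * b := by positivity
  have hαab : α * (a * b) = n := div_mul_cancel₀ _ hab.ne'
  have hα : 0 ≤ α ∧ α ≤ 1 :=
    ⟨by positivity, (div_le_one hab).2 (by exact_mod_cast le_card_mul_card_compl ha hb)⟩
  have hcut : 1 ≤ cut := by
    obtain ⟨u, hu⟩ := card_pos.1 (by omega : 0 < a)
    obtain ⟨v, hv⟩ := card_pos.1 (by omega : 0 < b)
    exact Nat.one_le_cast.2 (one_le_cutFin hconn hu (mem_compl.1 hv))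
  have hcross : ((crossPairs Sstar).card : ℝ) ≤ a * b := by
    exact_mod_cast card_crossPairs_le Sstar
  calc ∑ p ∈ pairsFin n, w p.1 p.2 * (s p.1 p.2) ^ 2
      ≤ α ^ 2 * (cut + lam * (crossPairs Sstar).card) :=
        sum_weight_mul_sq_le G Sstar hlam.1.le w s hw hs
    _ ≤ α ^ 2 * (cut + lam * (a * b)) := by
        gcongr
        exact hlam.1.le
    _ = α * (α * cut) + lam * n * α := by
        rw [← hαab]
        ring
    _ ≤ α * cut + lam * n * α * cut := by
        have hlnα : 0 ≤ lam * n * α := mul_nonneg (mul_nonneg hlam.1.le n.cast_nonneg) hα.1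
        exact add_le_add (mul_le_of_le_one_left (by positivity) hα.2)
          (le_mul_of_one_le_right hlnα hcut)
    _ = φ Sstar * (1 + lam * n) := by
        rw [hφ]
        ring

/-- For a connected graph with `n > 4`, an optimal sparsest
cut set `S*` with both sides of size at least `2`, `λ ∈ (0,1)`, weights `1` on
edges and `λ` elsewhere, and the cut vector `s*`, we have
`∑_{i<j} w_ij (s*_ij)² ≤ φ*(1 + λn)`. -/
theorem stmt6 {n : ℕ} (G : SimpleGraph (Fin n)) [DecidableRel G.Adj]
    (hconn : G.Connected) (hn : 4 < n)
    (φ : Finset (Fin n) → ℝ)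
    (hφ : ∀ S : Finset (Fin n),
      φ S = (n : ℝ) * (cutFin G S : ℝ) / ((S.card : ℝ) * (Sᶜ.card : ℝ)))
    (Sstar : Finset (Fin n)) (hS_ne : Sstar.Nonempty)
    (hS_proper : Sstar ≠ Finset.univ)
    (hS_opt : ∀ S : Finset (Fin n), S.Nonempty → S ≠ Finset.univ →
      φ Sstar ≤ φ S)
    (hS_two : 2 ≤ Sstar.card ∧ 2 ≤ Sstarᶜ.card)
    (lam : ℝ) (hlam : 0 < lam ∧ lam < 1)
    (w : Fin n → Fin n → ℝ)
    (hw : ∀ i j, w i j = if G.Adj i j then 1 else lam)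
    (s : Fin n → Fin n → ℝ)
    (hs : ∀ i j, s i j =
      if (i ∈ Sstar ∧ j ∉ Sstar) ∨ (i ∉ Sstar ∧ j ∈ Sstar)
        then (n : ℝ) / ((Sstar.card : ℝ) * (Sstarᶜ.card : ℝ)) else 0) :
    ∑ p ∈ pairsFin n, w p.1 p.2 * (s p.1 p.2) ^ 2
      ≤ φ Sstar * (1 + lam * n) :=
  stmt6_general G hconn φ hφ Sstar hS_two lam hlam w hw s hs
end

section
/- Let V be a finite set with n = |V| ≥ 3 elements, and let x = (x_ij) be a vector on pairs of distinct elements of V satisfying x_ij ≥ 0 for all pairs, x_ij ≤ x_ik + x_jk for all triples of distinct elements, and Σ_{i<j} x_ij = n. Then x_ij ≤ n/(n-1) for every pair (i,j). -/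
open Finset

/-- Sort a pair into increasing order. -/
def srt {n : ℕ} (a b : Fin n) : Fin n × Fin n := if a < b then (a, b) else (b, a)

lemma srt_inj {n : ℕ} {a b c d : Fin n} (h : srt a b = srt c d) :
    (a = c ∧ b = d) ∨ (a = d ∧ b = c) := by
  unfold srt at h
  split_ifs at h with h1 h2 h2 <;>
    simp only [Prod.mk.injEq] at h <;> tauto

lemma srt_mem {n : ℕ} {a b : Fin n} (h : a ≠ b) : srt a b ∈ pairsFin n := by
  unfold srt pairsFin
  rcases lt_or_gt_of_ne h with h' | h' <;> simp [h', not_lt.mpr h'.le]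

lemma srt_val {n : ℕ} (x : Fin n → Fin n → ℝ) (hx_symm : ∀ i j, x i j = x j i)
    (a b : Fin n) : x (srt a b).1 (srt a b).2 = x a b := by
  unfold srt
  split_ifs <;> simp [hx_symm a b]

/-- If `n ≥ 3` and `x` is symmetric, nonnegative, satisfies
all triangle inequalities and `∑_{i<j} x_ij = n`, then `x_ij ≤ n/(n-1)` for
every pair of distinct indices. -/
theorem stmt8 {n : ℕ} (hn : 3 ≤ n)
    (x : Fin n → Fin n → ℝ)
    (hx_symm : ∀ i j, x i j = x j i)
    (hx_nonneg : ∀ i j : Fin n, i ≠ j → 0 ≤ x i j)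
    (hx_tri : ∀ i j k : Fin n, i ≠ j → i ≠ k → j ≠ k → x i j ≤ x i k + x j k)
    (hx_sum : ∑ p ∈ pairsFin n, x p.1 p.2 = (n : ℝ)) :
    ∀ i j : Fin n, i ≠ j → x i j ≤ (n : ℝ) / ((n : ℝ) - 1) := by
  intro i j hij
  set A : Finset (Fin n) := univ.filter (fun k => k ≠ i ∧ k ≠ j) with hA
  have hmemA : ∀ k, k ∈ A ↔ k ≠ i ∧ k ≠ j := by
    intro k; simp [hA]
  have hcardA : A.card = n - 2 := by
    have : A = (univ : Finset (Fin n)) \ {i, j} := by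
      ext k; simp [hA, and_comm]
    rw [this, Finset.card_sdiff_of_subset (by simp)]
    rw [Finset.card_univ, Fintype.card_fin, Finset.card_insert_of_notMem (by simp [hij]),
      Finset.card_singleton]
  -- injectivity facts
  have hinjA : ∀ a : Fin n, ∀ k ∈ A, ∀ k' ∈ A, srt a k = srt a k' → k = k' := by
    intro a k hk k' hk' h
    rw [hmemA] at hk hk'
    rcases srt_inj h with ⟨h1, h2⟩ | ⟨h1, h2⟩
    · exact h2
    · exact h2.trans h1
  -- the collection of pairs {i,k} and {j,k}, k ∈ A, plus {i,j}
  set T : Finset (Fin n × Fin n) :=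
    insert (srt i j) ((A.image (srt i)) ∪ (A.image (srt j))) with hT
  have hdisj : Disjoint (A.image (srt i)) (A.image (srt j)) := by
    rw [Finset.disjoint_left]
    intro p hp hp'
    simp only [Finset.mem_image] at hp hp'
    obtain ⟨k, hk, hk2⟩ := hp
    obtain ⟨k', hk', hk2'⟩ := hp'
    rw [hmemA] at hk hk'
    rcases srt_inj (hk2.trans hk2'.symm) with ⟨h1, h2⟩ | ⟨h1, h2⟩
    · exact hij h1
    · exact hk'.1 h1.symm
  have hnotmem : srt i j ∉ (A.image (srt i)) ∪ (A.image (srt j)) := by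
    intro h
    simp only [Finset.mem_union, Finset.mem_image] at h
    rcases h with ⟨k, hk, hk2⟩ | ⟨k, hk, hk2⟩ <;> rw [hmemA] at hk
    · rcases srt_inj hk2 with ⟨h1, h2⟩ | ⟨h1, h2⟩
      · exact hk.2 h2
      · exact hij h1
    · rcases srt_inj hk2 with ⟨h1, h2⟩ | ⟨h1, h2⟩
      · exact hij h1.symm
      · exact hk.1 h2
  have hTsub : T ⊆ pairsFin n := by
    intro p hp
    rw [hT] at hp
    simp only [Finset.mem_insert, Finset.mem_union, Finset.mem_image] at hp
    rcases hp with rfl | ⟨k, hk, rfl⟩ | ⟨k, hk, rfl⟩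
    · exact srt_mem hij
    · rw [hmemA] at hk; exact srt_mem (Ne.symm hk.1)
    · rw [hmemA] at hk; exact srt_mem (Ne.symm hk.2)
  have hsumT : ∑ p ∈ T, x p.1 p.2
      = x i j + (∑ k ∈ A, x i k + ∑ k ∈ A, x j k) := by
    rw [hT, Finset.sum_insert hnotmem, Finset.sum_union hdisj,
      Finset.sum_image (hinjA i), Finset.sum_image (hinjA j),
      srt_val x hx_symm]
    simp [srt_val x hx_symm]
  have hle1 : ∑ p ∈ T, x p.1 p.2 ≤ (n : ℝ) := by
    rw [← hx_sum]
    refine Finset.sum_le_sum_of_subset_of_nonneg hTsub ?_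
    intro p hp _
    simp only [pairsFin, Finset.mem_filter] at hp
    exact hx_nonneg _ _ (ne_of_lt hp.2)
  have hle2 : ((n : ℝ) - 2) * x i j ≤ ∑ k ∈ A, x i k + ∑ k ∈ A, x j k := by
    rw [← Finset.sum_add_distrib]
    have : ∑ _k ∈ A, x i j ≤ ∑ k ∈ A, (x i k + x j k) := by
      refine Finset.sum_le_sum ?_
      intro k hk
      rw [hmemA] at hk
      exact hx_tri i j k hij (Ne.symm hk.1) (Ne.symm hk.2)
    calc ((n : ℝ) - 2) * x i j = A.card * x i j := by
            rw [hcardA]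
            have : ((n - 2 : ℕ) : ℝ) = (n : ℝ) - 2 := by
              have : 2 ≤ n := by omega
              push_cast [this]; ring
            rw [this]
      _ = ∑ _k ∈ A, x i j := by rw [Finset.sum_const, nsmul_eq_mul]
      _ ≤ _ := this
  have key : ((n : ℝ) - 1) * x i j ≤ (n : ℝ) := by
    calc ((n : ℝ) - 1) * x i j = x i j + ((n : ℝ) - 2) * x i j := by ring
      _ ≤ x i j + (∑ k ∈ A, x i k + ∑ k ∈ A, x j k) := by linarith
      _ = ∑ p ∈ T, x p.1 p.2 := hsumT.symm
      _ ≤ (n : ℝ) := hle1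
  have hpos : (0 : ℝ) < (n : ℝ) - 1 := by
    have : (3 : ℝ) ≤ (n : ℝ) := by exact_mod_cast hn
    linarith
  rw [le_div_iff₀ hpos]
  linarith [key]
end

section
/- Let A ∈ ℝ^{M×N}, b ∈ ℝ^M, c ∈ ℝ^N, γ > 0, and let W be a diagonal positive definite N×N matrix. Let x* be a minimizer of cᵀx over {x : Ax ≤ b}. Suppose x̂ ∈ ℝ^N and ŷ ∈ ℝ^M satisfy ŷ ≥ 0 and (1/γ)Wx̂ = -Aᵀŷ - c. Set p̂ = (1/γ)Wx̂. Let ℬ ⊆ ℝ^N be any set containing x*, and let x̃ be a maximizer of p̂ᵀx over {x ∈ ℬ : cᵀx ≤ cᵀx̂}, where additionally cᵀx* ≤ cᵀx̂. Then -bᵀŷ - p̂ᵀx̃ ≤ cᵀx*. -/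
open Matrix

/-- A posteriori lower bound via a small LP: with `x*`
optimal for `min cᵀx` s.t. `Ax ≤ b`, dual-type iterates `ŷ ≥ 0` with
`(1/γ)Wx̂ = -Aᵀŷ - c`, `p̂ = (1/γ)Wx̂`, a set `ℬ ∋ x*`, `cᵀx* ≤ cᵀx̂`, and
`x̃` maximizing `p̂ᵀx` over `{x ∈ ℬ : cᵀx ≤ cᵀx̂}`, we have
`-bᵀŷ - p̂ᵀx̃ ≤ cᵀx*`. -/
theorem stmt10 {M N : ℕ} (A : Matrix (Fin M) (Fin N) ℝ) (b : Fin M → ℝ)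
    (c : Fin N → ℝ) (γ : ℝ) (hγ : 0 < γ)
    (W : Matrix (Fin N) (Fin N) ℝ) (hWdiag : W.IsDiag) (hWpd : W.PosDef)
    (xs : Fin N → ℝ)
    (hxs_feas : ∀ i, A.mulVec xs i ≤ b i)
    (hxs_opt : ∀ x : Fin N → ℝ, (∀ i, A.mulVec x i ≤ b i) → c ⬝ᵥ xs ≤ c ⬝ᵥ x)
    (xh : Fin N → ℝ) (yh : Fin M → ℝ) (hyh : ∀ i, 0 ≤ yh i)
    (hkkt : (1 / γ) • W.mulVec xh = -(Aᵀ.mulVec yh) - c)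
    (ph : Fin N → ℝ) (hph : ph = (1 / γ) • W.mulVec xh)
    (ℬ : Set (Fin N → ℝ)) (hxsB : xs ∈ ℬ)
    (hcxs : c ⬝ᵥ xs ≤ c ⬝ᵥ xh)
    (xt : Fin N → ℝ) (hxt_mem : xt ∈ ℬ ∧ c ⬝ᵥ xt ≤ c ⬝ᵥ xh)
    (hxt_opt : ∀ x ∈ ℬ, c ⬝ᵥ x ≤ c ⬝ᵥ xh → ph ⬝ᵥ x ≤ ph ⬝ᵥ xt) :
    -(b ⬝ᵥ yh) - ph ⬝ᵥ xt ≤ c ⬝ᵥ xs := by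
  have h1 : ph ⬝ᵥ xs ≤ ph ⬝ᵥ xt := hxt_opt xs hxsB hcxs
  have hph' : ph = -(Aᵀ.mulVec yh) - c := by rw [hph, hkkt]
  have h2 : ph ⬝ᵥ xs = -(yh ⬝ᵥ A.mulVec xs) - c ⬝ᵥ xs := by
    rw [hph']
    simp [sub_dotProduct, neg_dotProduct, Matrix.dotProduct_mulVec,
      Matrix.vecMul_transpose, dotProduct_comm]
  have h3 : yh ⬝ᵥ A.mulVec xs ≤ yh ⬝ᵥ b := by
    apply Finset.sum_le_sum
    intro i _
    exact mul_le_mul_of_nonneg_left (hxs_feas i) (hyh i)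
  have h4 : b ⬝ᵥ yh = yh ⬝ᵥ b := dotProduct_comm _ _
  linarith
end
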